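/- arXiv:1111.1385 — 2 statements merged into one kernel-verified Lean document; each statement's English description precedes it below -/
import Mathlib

section
/- Let S₁, S₂, S₃ be real numbers with S₁+S₂+S₃ > 0 and S₁S₂+S₁S₃+S₂S₃ > 0. Then for all real x₁,x₂,x₃ satisfying the constraint x₁ − x₂ + x₃ = 0 (coming from d of an alternating cochain on a triangle), one has S₁x₁² + S₂x₂² + S₃x₃² ≥ ε(x₁²+x₂²+x₃²), where ε > 0 is the smallest root of (λ−S₁)(λ−S₂)+(λ−S₁)(λ−S₃)+(λ−S₂)(λ−S₃). -/
/-- If `S₁+S₂+S₃ > 0` and `S₁S₂+S₁S₃+S₂S₃ > 0`, then for all `x` with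
`x₁ − x₂ + x₃ = 0` we have `Σ Sᵢxᵢ² ≥ ε Σ xᵢ²`, where `ε > 0` is the smallest
root of `(λ−S₁)(λ−S₂)+(λ−S₁)(λ−S₃)+(λ−S₂)(λ−S₃)`. -/
theorem stmt_2 (S₁ S₂ S₃ : ℝ) (hsum : 0 < S₁ + S₂ + S₃)
    (hprod : 0 < S₁ * S₂ + S₁ * S₃ + S₂ * S₃) (ε : ℝ) (hε : 0 < ε)
    (hroot : (ε - S₁) * (ε - S₂) + (ε - S₁) * (ε - S₃) + (ε - S₂) * (ε - S₃) = 0)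
    (hmin : ∀ l : ℝ,
      (l - S₁) * (l - S₂) + (l - S₁) * (l - S₃) + (l - S₂) * (l - S₃) = 0 → ε ≤ l) :
    ∀ x₁ x₂ x₃ : ℝ, x₁ - x₂ + x₃ = 0 →
      ε * (x₁ ^ 2 + x₂ ^ 2 + x₃ ^ 2) ≤ S₁ * x₁ ^ 2 + S₂ * x₂ ^ 2 + S₃ * x₃ ^ 2 := by
  -- the other root of the quadratic
  have h2 : ε ≤ 2 * (S₁ + S₂ + S₃) / 3 - ε := by
    apply hmin
    linear_combination hroot
  have habc : S₁ + S₂ + S₃ - 3 * ε ≥ 0 := by linarith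
  -- pairwise sums nonnegative
  have hab : S₁ + S₂ - 2 * ε ≥ 0 := by
    by_contra h
    push_neg at h
    nlinarith [sq_nonneg (S₁ - S₂), sq_nonneg (S₁ + S₂ - 2*ε), sq_nonneg (S₃ - ε)]
  have hbc : S₂ + S₃ - 2 * ε ≥ 0 := by
    by_contra h
    push_neg at h
    nlinarith [sq_nonneg (S₂ - S₃), sq_nonneg (S₂ + S₃ - 2*ε), sq_nonneg (S₁ - ε)]
  intro x₁ x₂ x₃ hx
  have hx2 : x₂ = x₁ + x₃ := by linarith
  subst hx2
  rcases eq_or_lt_of_le hab with h0 | hpos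
  · -- S₁ + S₂ = 2ε, then (S₂-ε)² = 0
    have hb : S₂ - ε = 0 := by nlinarith [sq_nonneg (S₂ - ε)]
    have ha : S₁ - ε = 0 := by linarith
    nlinarith [mul_nonneg hbc (sq_nonneg x₃)]
  · nlinarith [sq_nonneg ((S₁ + S₂ - 2*ε) * x₁ + (S₂ - ε) * x₃),
      mul_pos hpos hpos, hroot]
end

section
/- For integers 0 ≤ k < l, if the number of k-faces C(l+1,k+1) is at most the number of (k+1)-faces C(l+1,k+2), then the polynomial p_k^l = det M_k^l, as a polynomial in the diagonal variables x_σ, has degree 0 (it is constant); and if C(l+1,k+1) < C(l+1,k+2), then it is identically 0. -/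
open Matrix

lemma det_zero_of_small_support {ι : Type*} [Fintype ι] [DecidableEq ι]
    (M : Matrix ι ι ℝ) (s t : Finset ι)
    (h : ∀ i ∈ s, ∀ j ∉ t, M i j = 0) (hc : t.card < s.card) : M.det = 0 := by
  rw [← Matrix.exists_vecMul_eq_zero_iff]
  -- linear map from s-indexed vectors to t-indexed vectors
  set M' : Matrix s t ℝ := Matrix.of (fun i j => M i.1 j.1) with hM'
  have hninj : ¬ Function.Injective M'.vecMulLinear := by
    intro hinj
    have := LinearMap.finrank_le_finrank_of_injective hinj
    simp only [Module.finrank_fintype_fun_eq_card, Fintype.card_coe] at this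
    omega
  have : ∃ c : s → ℝ, c ≠ 0 ∧ M'.vecMulLinear c = 0 := by
    rw [← LinearMap.ker_eq_bot] at hninj
    obtain ⟨c, hc1, hc2⟩ := (Submodule.ne_bot_iff _).mp hninj
    exact ⟨c, hc2, hc1⟩
  obtain ⟨c, hc0, hcz⟩ := this
  refine ⟨fun i => if h : i ∈ s then c ⟨i, h⟩ else 0, ?_, ?_⟩
  · obtain ⟨i0, hi0⟩ := Function.ne_iff.mp hc0
    intro hcon
    apply hi0
    have := congrFun hcon i0.1
    simpa [i0.2] using this
  · funext j
    simp only [Matrix.vecMul, dotProduct, Pi.zero_apply]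
    by_cases hj : j ∈ t
    · have h0 := congrFun hcz ⟨j, hj⟩
      simp only [Matrix.vecMulLinear_apply, Matrix.vecMul, dotProduct,
        Pi.zero_apply] at h0
      rw [← Finset.sum_subset (Finset.subset_univ s) (fun i _ his => by simp [his])]
      rw [← Finset.sum_attach s (fun i => (if h : i ∈ s then c ⟨i, h⟩ else 0) * M i j)]
      rw [← h0]
      exact Finset.sum_congr rfl fun i _ => by simp [hM', i.2]
    · refine Finset.sum_eq_zero fun i _ => ?_
      by_cases his : i ∈ s
      · simp [h i his j hj]
      · simp [his]

lemma aux_zero (n m : ℕ) (hnm : n < m) (B : Matrix (Fin n) (Fin m) ℝ) (x : Fin n → ℝ) :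
    (Matrix.fromBlocks (Matrix.diagonal x) B B.transpose 0).det = 0 := by
  apply det_zero_of_small_support _
    (Finset.univ.map ⟨Sum.inr, Sum.inr_injective⟩)
    (Finset.univ.map ⟨Sum.inl, Sum.inl_injective⟩)
  · intro i hi j hj
    simp only [Finset.mem_map, Finset.mem_univ, Function.Embedding.coeFn_mk, true_and] at hi hj
    obtain ⟨b, rfl⟩ := hi
    cases j with
    | inl a => exact absurd ⟨a, rfl⟩ hj
    | inr b' => simp [Matrix.fromBlocks]
  · simpa using hnm

lemma aux_step (n m : ℕ) (hnm : n ≤ m) (B : Matrix (Fin n) (Fin m) ℝ)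
    (x : Fin n → ℝ) (i : Fin n) :
    (Matrix.fromBlocks (Matrix.diagonal x) B B.transpose 0).det =
      (Matrix.fromBlocks (Matrix.diagonal (Function.update x i 0)) B B.transpose 0).det := by
  set M := Matrix.fromBlocks (Matrix.diagonal x) B B.transpose 0 with hM
  set u : (Fin n ⊕ Fin m) → ℝ := Sum.elim (Matrix.diagonal x i) 0 with hu
  set v : (Fin n ⊕ Fin m) → ℝ := Sum.elim 0 (B i) with hv
  have hrow : M = M.updateRow (Sum.inl i) (u + v) := by
    rw [show u + v = M (Sum.inl i) from ?_, Matrix.updateRow_eq_self]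
    funext j
    cases j with
    | inl j => simp [hu, hv, hM, Matrix.fromBlocks]
    | inr j => simp [hu, hv, hM, Matrix.fromBlocks]
  have h1 : (M.updateRow (Sum.inl i) u).det = 0 := by
    apply det_zero_of_small_support _
      (insert (Sum.inl i) (Finset.univ.map ⟨Sum.inr, Sum.inr_injective⟩))
      (Finset.univ.map ⟨Sum.inl, Sum.inl_injective⟩)
    · intro a ha j hj
      simp only [Finset.mem_map, Finset.mem_univ, Function.Embedding.coeFn_mk, true_and] at hj
      cases j with
      | inl a' => exact absurd ⟨a', rfl⟩ hj
      | inr b' =>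
        rcases Finset.mem_insert.mp ha with rfl | ha
        · simp [hu]
        · simp only [Finset.mem_map, Finset.mem_univ, Function.Embedding.coeFn_mk,
            true_and] at ha
          obtain ⟨b, rfl⟩ := ha
          rw [Matrix.updateRow_ne (by simp)]
          simp [hM, Matrix.fromBlocks]
    · rw [Finset.card_insert_of_notMem (by simp)]
      simpa using Nat.lt_succ_of_le hnm
  have h2 : M.updateRow (Sum.inl i) v =
      Matrix.fromBlocks (Matrix.diagonal (Function.update x i 0)) B B.transpose 0 := by
    funext a b
    rcases eq_or_ne a (Sum.inl i) with rfl | ha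
    · cases b with
      | inl b =>
        simp [hv, Matrix.fromBlocks, Matrix.diagonal_apply, Function.update]
      | inr b => simp [hv, Matrix.fromBlocks]
    · rw [Matrix.updateRow_ne ha]
      cases a with
      | inl a =>
        cases b with
        | inl b =>
          have hai : a ≠ i := fun h => ha (by rw [h])
          simp [hM, Matrix.fromBlocks, Matrix.diagonal_apply, Function.update, hai]
        | inr b => simp [hM, Matrix.fromBlocks]
      | inr a => rfl
  conv_lhs => rw [hrow]
  rw [Matrix.det_updateRow_add, h1, zero_add, h2]

lemma aux_const (n m : ℕ) (hnm : n ≤ m) (B : Matrix (Fin n) (Fin m) ℝ)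
    (x y : Fin n → ℝ) :
    (Matrix.fromBlocks (Matrix.diagonal x) B B.transpose 0).det =
      (Matrix.fromBlocks (Matrix.diagonal y) B B.transpose 0).det := by
  set f : (Fin n → ℝ) → ℝ :=
    fun z => (Matrix.fromBlocks (Matrix.diagonal z) B B.transpose 0).det with hf
  have key : ∀ (s : Finset (Fin n)) (z : Fin n → ℝ),
      f z = f (fun i => if i ∈ s then 0 else z i) := by
    intro s
    induction s using Finset.induction with
    | empty => intro z; simp
    | @insert a s ha ih =>
      intro z
      rw [ih z]
      simp only [hf]
      rw [aux_step n m hnm B _ a]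
      have hfun : Function.update (fun i => if i ∈ s then 0 else z i) a 0 =
          fun i => if i ∈ insert a s then 0 else z i := by
        funext j
        rcases eq_or_ne j a with rfl | hja
        · simp [Function.update]
        · simp [Function.update, hja, Finset.mem_insert]
      rw [hfun]
  have hx := key Finset.univ x
  have hy := key Finset.univ y
  simp only [Finset.mem_univ, if_true, hf] at hx hy
  rw [hx, hy]

/-- Degeneracy of `p_k^l = det M_k^l`: with `|F| = C(l+1,k+1)` `k`-faces and
`|F′| = C(l+1,k+2)` `(k+1)`-faces of an `l`-simplex, and `M_k^l(x)` the
symmetric matrix with `x_σ` on the `F`-diagonal, incidence-sign block `B`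
between `F` and `F′` and zeros elsewhere: if `|F| ≤ |F′|` then `det M_k^l(x)`
does not depend on `x` (degree 0), and if `|F| < |F′|` it is identically 0. -/
theorem stmt_16 (k l : ℕ) (hkl : k < l)
    (B : Matrix (Fin ((l+1).choose (k+1))) (Fin ((l+1).choose (k+2))) ℝ) :
    ((l+1).choose (k+1) ≤ (l+1).choose (k+2) →
      ∀ x y : Fin ((l+1).choose (k+1)) → ℝ,
        (Matrix.fromBlocks (Matrix.diagonal x) B B.transpose 0).det =
          (Matrix.fromBlocks (Matrix.diagonal y) B B.transpose 0).det) ∧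
    ((l+1).choose (k+1) < (l+1).choose (k+2) →
      ∀ x : Fin ((l+1).choose (k+1)) → ℝ,
        (Matrix.fromBlocks (Matrix.diagonal x) B B.transpose 0).det = 0) := by
  exact ⟨fun h x y => aux_const _ _ h B x y, fun h x => aux_zero _ _ h B x⟩
end
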